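/- Let {x_j} be a standard frame of a Hilbert A-module N with frame operator Θ and frame constants c₁ ≤ c₂. Then ‖Θ‖ ≤ √c₂, the operator Θ*Θ satisfies Θ*Θ ≥ c₁·Id in the C*-algebra of adjointable endomorphisms of N, and Θ*Θ is invertible with ‖(Θ*Θ)^{-1}‖ ≤ 1/c₁. -/

import Mathlib

open scoped RightActions

/-- The December 2024 Mathlib `CStarModule` (right Hilbert module, `⟪x, y <• a⟫ = ⟪x, y⟫ * a`),
restated verbatim since Mathlib's `CStarModule` is now a left module with another axiom. -/
class CStarModuleRight (A : outParam <| Type*) (E : Type*) [NonUnitalSemiring A] [StarRing A]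
    [Module ℂ A] [AddCommGroup E] [Module ℂ E] [PartialOrder A] [SMul Aᵐᵒᵖ E] [Norm A] [Norm E]
    extends Inner A E where
  inner_add_right {x} {y} {z} : inner x (y + z) = inner x y + inner x z
  inner_self_nonneg {x} : 0 ≤ inner x x
  inner_self {x} : inner x x = 0 ↔ x = 0
  inner_op_smul_right {a : A} {x y : E} : inner x (y <• a) = inner x y * a
  inner_smul_right_complex {z : ℂ} {x} {y} : inner x (z • y) = z • inner x y
  star_inner x y : star (inner x y) = inner y x
  norm_eq_sqrt_norm_inner_self x : ‖x‖ = √‖inner x x‖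

/-- A family `x : J → E` is a standard frame of the Hilbert `A`-module `E` with frame
constants `c₁, c₂ > 0`. -/
def IsStandardFrame {A E : Type*} [NonUnitalCStarAlgebra A] [PartialOrder A]
    [StarOrderedRing A] [NormedAddCommGroup E] [NormedSpace ℂ E] [SMul Aᵐᵒᵖ E]
    [CStarModuleRight A E] {J : Type*} (x : J → E) (c₁ c₂ : ℝ) : Prop :=
  0 < c₁ ∧ 0 < c₂ ∧ ∀ v : E, ∃ S : A,
    HasSum (fun j => (inner A v (x j) : A) * (inner A (x j) v : A)) S ∧
    c₁ • (inner A v v : A) ≤ S ∧ S ≤ c₂ • (inner A v v : A)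

namespace CStarModuleRight

variable {A E : Type*} [NonUnitalCStarAlgebra A] [PartialOrder A] [StarOrderedRing A]
  [NormedAddCommGroup E] [NormedSpace ℂ E] [SMul Aᵐᵒᵖ E] [CStarModuleRight A E]

lemma inner_add_left {x y z : E} : inner A (x + y) z = inner A x z + inner A y z := by
  rw [← star_inner, inner_add_right, star_add, star_inner, star_inner]

lemma inner_sub_right {x y z : E} : inner A x (y - z) = inner A x y - inner A x z :=
  map_sub (AddMonoidHom.mk' (fun w => inner A x w) (fun _ _ => inner_add_right)) y z

lemma inner_sub_left {x y z : E} : inner A (x - y) z = inner A x z - inner A y z := by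
  rw [← star_inner, inner_sub_right, star_sub, star_inner, star_inner]

lemma inner_smul_right_real {r : ℝ} {x y : E} : inner A x (r • y) = r • inner A x y := by
  have h := inner_smul_right_complex (A := A) (z := (r:ℂ)) (x := x) (y := y)
  rw [Complex.coe_smul, Complex.coe_smul] at h
  exact h

lemma inner_smul_left_real {r : ℝ} {x y : E} : inner A (r • x) y = r • inner A x y := by
  rw [← star_inner, inner_smul_right_real, star_smul, star_trivial, star_inner]

lemma norm_sq_eq {x : E} : ‖x‖ ^ 2 = ‖inner A x x‖ := by
  rw [norm_eq_sqrt_norm_inner_self (A := A) x, Real.sq_sqrt (norm_nonneg _)]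

end CStarModuleRight

section Aux

variable {A : Type*} [NonUnitalCStarAlgebra A] [PartialOrder A] [StarOrderedRing A]

lemma aux_norm_le {a b : A} (ha : IsSelfAdjoint a) (h1 : -b ≤ a) (h2 : a ≤ b) :
    ‖a‖ ≤ ‖b‖ := by
  have hb : IsSelfAdjoint b := by
    have h3 : 0 ≤ b - a := sub_nonneg.mpr h2
    have h4 : 0 ≤ a + b := neg_le_iff_add_nonneg.mp h1
    have h5 : IsSelfAdjoint ((b - a) + (a + b)) := (IsSelfAdjoint.of_nonneg h3).add (.of_nonneg h4)
    have hbb : (b - a) + (a + b) = b + b := by abel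
    rw [hbb] at h5
    have h6 : (2:ℝ) • star b = (2:ℝ) • b := by
      rw [two_smul, two_smul]; simpa [star_add] using h5.star_eq
    exact smul_right_injective A (two_ne_zero) h6
  have ha' : IsSelfAdjoint (a : Unitization ℂ A) := ha.inr ℂ
  have hb' : IsSelfAdjoint (b : Unitization ℂ A) := hb.inr ℂ
  have h2' : (a : Unitization ℂ A) ≤ algebraMap ℝ _ ‖(b : Unitization ℂ A)‖ :=
    le_trans ((Unitization.inr_le_iff a b).mpr h2) hb'.le_algebraMap_norm_self
  have h1' : -(algebraMap ℝ (Unitization ℂ A) ‖(b : Unitization ℂ A)‖) ≤ (a : Unitization ℂ A) := by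
    refine le_trans ?_ ((Unitization.inr_le_iff (-b) a (hb.neg) ha).mpr h1)
    rw [Unitization.inr_neg]
    exact neg_le_neg hb'.le_algebraMap_norm_self
  rw [← Unitization.norm_inr (𝕜 := ℂ) a, ← Unitization.norm_inr (𝕜 := ℂ) b]
  rcases CStarAlgebra.norm_or_neg_norm_mem_spectrum (a := (a : Unitization ℂ A)) ha' with h | h
  · exact (le_algebraMap_iff_spectrum_le ha').mp h2' _ h
  · have := (algebraMap_le_iff_le_spectrum ha').mp (show algebraMap ℝ (Unitization ℂ A) (-‖(b : Unitization ℂ A)‖) ≤ (a : Unitization ℂ A) by rw [map_neg]; exact h1') _ h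
    linarith

open scoped RightActions

variable {A E : Type*} [NonUnitalCStarAlgebra A] [PartialOrder A] [StarOrderedRing A]
  [NormedAddCommGroup E] [NormedSpace ℂ E] [SMul Aᵐᵒᵖ E] [CStarModuleRight A E]

local notation "⟪" x ", " y "⟫" => inner (𝕜 := A) x y

lemma aux_opnorm (R : E →L[ℂ] E) (k : ℝ) (hk : 0 ≤ k)
    (hsa : ∀ v w : E, ⟪R v, w⟫ = ⟪v, R w⟫)
    (hub : ∀ v : E, ⟪v, R v⟫ ≤ k • ⟪v, v⟫)
    (hlb : ∀ v : E, -(k • ⟪v, v⟫) ≤ ⟪v, R v⟫) : ‖R‖ ≤ k := by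
  have hsa' : ∀ w : E, IsSelfAdjoint ⟪w, R w⟫ := fun w => by
    rw [IsSelfAdjoint, CStarModuleRight.star_inner, hsa]
  have key : ∀ u v : E, ‖⟪u + v, R (u + v)⟫ - ⟪u - v, R (u - v)⟫‖ ≤
      k * (2 * ‖u‖ ^ 2 + 2 * ‖v‖ ^ 2) := by
    intro u v
    set c : A := (2:ℝ) • ⟪u, u⟫ + (2:ℝ) • ⟪v, v⟫ with hc
    have par : ⟪u + v, u + v⟫ + ⟪u - v, u - v⟫ = c := by
      simp only [hc, CStarModuleRight.inner_add_right, CStarModuleRight.inner_add_left,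
        CStarModuleRight.inner_sub_right, CStarModuleRight.inner_sub_left, two_smul]
      abel
    have hupper : ⟪u + v, R (u + v)⟫ - ⟪u - v, R (u - v)⟫ ≤ k • c := by
      have h1 := hub (u + v)
      have h2 := neg_le.mp (hlb (u - v))
      calc ⟪u + v, R (u + v)⟫ - ⟪u - v, R (u - v)⟫
          ≤ k • ⟪u + v, u + v⟫ + k • ⟪u - v, u - v⟫ := by
            rw [sub_eq_add_neg]; exact add_le_add h1 h2
        _ = k • c := by rw [← smul_add, par]
    have hlower : -(k • c) ≤ ⟪u + v, R (u + v)⟫ - ⟪u - v, R (u - v)⟫ := by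
      have h1 := hlb (u + v)
      have h2 := hub (u - v)
      calc -(k • c) = -(k • ⟪u + v, u + v⟫) + -(k • ⟪u - v, u - v⟫) := by
            rw [← neg_add, ← smul_add, par]
        _ ≤ ⟪u + v, R (u + v)⟫ + -⟪u - v, R (u - v)⟫ := add_le_add h1 (neg_le_neg h2)
        _ = ⟪u + v, R (u + v)⟫ - ⟪u - v, R (u - v)⟫ := (sub_eq_add_neg _ _).symm
    have hDsa : IsSelfAdjoint (⟪u + v, R (u + v)⟫ - ⟪u - v, R (u - v)⟫) :=
      (hsa' (u + v)).sub (hsa' (u - v))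
    calc ‖⟪u + v, R (u + v)⟫ - ⟪u - v, R (u - v)⟫‖ ≤ ‖k • c‖ :=
          aux_norm_le hDsa hlower hupper
      _ ≤ k * (2 * ‖u‖ ^ 2 + 2 * ‖v‖ ^ 2) := by
          rw [norm_smul, Real.norm_of_nonneg hk]
          refine mul_le_mul_of_nonneg_left ?_ hk
          refine (norm_add_le _ _).trans ?_
          rw [norm_smul, norm_smul, CStarModuleRight.norm_sq_eq, CStarModuleRight.norm_sq_eq]
          simp [Real.norm_ofNat]
  refine R.opNorm_le_bound hk fun v => ?_
  by_cases hv : v = 0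
  · simp [hv]
  by_cases hRv : R v = 0
  · simp [hRv]; positivity
  have hRvpos : 0 < ‖R v‖ := norm_pos_iff.mpr hRv
  have hvpos : 0 < ‖v‖ := norm_pos_iff.mpr hv
  set t : ℝ := ‖v‖ / ‖R v‖ with ht
  have htpos : 0 < t := div_pos hvpos hRvpos
  set u : E := t • R v with hu
  have hDval : ⟪u + v, R (u + v)⟫ - ⟪u - v, R (u - v)⟫ = (4 * t) • ⟪R v, R v⟫ := by
    have e1 : ⟪u, R v⟫ = t • ⟪R v, R v⟫ := by rw [hu, CStarModuleRight.inner_smul_left_real]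
    have e2 : ⟪v, R u⟫ = t • ⟪R v, R v⟫ := by
      rw [hu, R.map_smul_of_tower, CStarModuleRight.inner_smul_right_real, ← hsa v (R v)]
    simp only [map_add, map_sub, CStarModuleRight.inner_add_right, CStarModuleRight.inner_add_left,
      CStarModuleRight.inner_sub_right, CStarModuleRight.inner_sub_left]
    rw [e1, e2]
    module
  have hnorm : ‖(4 * t) • ⟪R v, R v⟫‖ = 4 * t * ‖R v‖ ^ 2 := by
    rw [norm_smul, Real.norm_of_nonneg (by positivity), ← CStarModuleRight.norm_sq_eq]
  have hKey := key u v
  rw [hDval, hnorm] at hKey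
  have hun : ‖u‖ = ‖v‖ := by
    rw [hu, norm_smul, Real.norm_of_nonneg htpos.le, ht, div_mul_cancel₀ _ hRvpos.ne']
  rw [hun] at hKey
  have htv : t * ‖R v‖ = ‖v‖ := by rw [ht, div_mul_cancel₀ _ hRvpos.ne']
  -- 4 * t * ‖R v‖^2 ≤ k * 4 ‖v‖^2, i.e. 4 ‖v‖ ‖R v‖ ≤ 4 k ‖v‖^2
  nlinarith [hKey, htv, hvpos, hRvpos]
end Aux

set_option maxHeartbeats 1000000 in
/-- Let `{x_j}` be a standard frame of the Hilbert `A`-module `E` with constants `c₁ ≤ c₂`,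
with frame operator `Θ : E → F` (where `F` plays the role of `ℓ²_J(A)`), adjointable with
adjoint `Θs`, satisfying `⟨Θv,Θv⟩ = Σ_j ⟨v,x_j⟩⟨x_j,v⟩`.  Then `‖Θ‖ ≤ √c₂`, the operator
`Θ*Θ` satisfies `Θ*Θ ≥ c₁·Id` (as quadratic forms), and `Θ*Θ` is invertible with
`‖(Θ*Θ)⁻¹‖ ≤ 1/c₁`. -/
theorem stmt_4 {A E F : Type*} [NonUnitalCStarAlgebra A] [PartialOrder A] [StarOrderedRing A]
    [NormedAddCommGroup E] [NormedSpace ℂ E] [SMul Aᵐᵒᵖ E] [CStarModuleRight A E] [CompleteSpace E]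
    [NormedAddCommGroup F] [NormedSpace ℂ F] [SMul Aᵐᵒᵖ F] [CStarModuleRight A F] [CompleteSpace F]
    {J : Type*} (x : J → E) (c₁ c₂ : ℝ) (hx : IsStandardFrame (A := A) x c₁ c₂)
    (hc : c₁ ≤ c₂)
    (Θ : E →L[ℂ] F) (Θs : F →L[ℂ] E)
    (hadj : ∀ (v : E) (w : F), (inner A (Θ v) w : A) = inner A v (Θs w))
    (hΘ : ∀ v : E,
      HasSum (fun j => (inner A v (x j) : A) * (inner A (x j) v : A)) (inner A (Θ v) (Θ v) : A)) :
    ‖Θ‖ ≤ Real.sqrt c₂ ∧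
    (∀ v : E, c₁ • (inner A v v : A) ≤ (inner A v (Θs (Θ v)) : A)) ∧
    ∃ Inv : E →L[ℂ] E, (∀ v : E, Θs (Θ (Inv v)) = v) ∧ (∀ v : E, Inv (Θs (Θ v)) = v) ∧
      ‖Inv‖ ≤ 1 / c₁ := by
  obtain ⟨hc1, hc2, hframe⟩ := hx
  have hbound : ∀ v : E, c₁ • (inner A v v : A) ≤ (inner A (Θ v) (Θ v) : A) ∧
      (inner A (Θ v) (Θ v) : A) ≤ c₂ • (inner A v v : A) := by
    intro v
    obtain ⟨S, hS, hl, hu⟩ := hframe v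
    obtain rfl := hS.unique (hΘ v)
    exact ⟨hl, hu⟩
  refine ⟨?_, ?_, ?_⟩
  · -- norm bound
    refine Θ.opNorm_le_bound (Real.sqrt_nonneg _) fun v => ?_
    have h := (hbound v).2
    have h0 : ‖Θ v‖ ^ 2 ≤ c₂ * ‖v‖ ^ 2 := by
      rw [CStarModuleRight.norm_sq_eq]
      calc ‖(inner A (Θ v) (Θ v) : A)‖ ≤ ‖c₂ • (inner A v v : A)‖ :=
            CStarAlgebra.norm_le_norm_of_nonneg_of_le CStarModuleRight.inner_self_nonneg h
        _ = c₂ * ‖v‖ ^ 2 := by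
            rw [norm_smul, Real.norm_of_nonneg hc2.le, CStarModuleRight.norm_sq_eq]
    have h1 := Real.sqrt_le_sqrt h0
    rwa [Real.sqrt_sq (norm_nonneg _), Real.sqrt_mul hc2.le,
      Real.sqrt_sq (norm_nonneg _)] at h1
  · intro v
    have h := (hbound v).1
    rwa [hadj v (Θ v)] at h
  · set T : E →L[ℂ] E := Θs.comp Θ with hT
    have hTapp : ∀ v, T v = Θs (Θ v) := fun v => rfl
    have hTinner : ∀ v : E, (inner A v (T v) : A) = inner A (Θ v) (Θ v) := fun v =>
      (hadj v (Θ v)).symm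
    have hTsa : ∀ v w : E, (inner A (T v) w : A) = inner A v (T w) := by
      intro v w
      calc (inner A (T v) w : A) = star (inner A w (T v) : A) := (CStarModuleRight.star_inner _ _).symm
        _ = star (inner A (Θ w) (Θ v) : A) := by rw [hTapp, ← hadj w (Θ v)]
        _ = (inner A (Θ v) (Θ w) : A) := CStarModuleRight.star_inner _ _
        _ = inner A v (T w) := hadj v (Θ w)
    have hsum : (0:ℝ) < c₁ + c₂ := by linarith
    set lam : ℝ := 2 / (c₁ + c₂) with hlam
    set k : ℝ := (c₂ - c₁) / (c₁ + c₂) with hkdef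
    have hlam0 : 0 ≤ lam := by positivity
    have hk0 : 0 ≤ k := div_nonneg (by linarith) hsum.le
    have hk1 : k < 1 := by rw [hkdef, div_lt_one hsum]; linarith
    set Rop : E →L[ℂ] E := 1 - lam • T with hRop
    have hRapp : ∀ v : E, Rop v = v - lam • T v := fun v => rfl
    have hkc1 : (1:ℝ) - lam * c₁ = k := by
      rw [hlam, hkdef]; field_simp; ring
    have hkc2 : (1:ℝ) - lam * c₂ = -k := by
      rw [hlam, hkdef]; field_simp; ring
    have hinnerR : ∀ v : E, (inner A v (Rop v) : A) =
        inner A v v - lam • (inner A (Θ v) (Θ v) : A) := by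
      intro v
      rw [hRapp, CStarModuleRight.inner_sub_right, CStarModuleRight.inner_smul_right_real, hTinner]
    have hub : ∀ v : E, (inner A v (Rop v) : A) ≤ k • inner A v v := by
      intro v
      rw [hinnerR]
      calc (inner A v v : A) - lam • (inner A (Θ v) (Θ v) : A)
          ≤ inner A v v - lam • (c₁ • (inner A v v : A)) :=
            sub_le_sub_left (smul_le_smul_of_nonneg_left (hbound v).1 hlam0) _
        _ = ((1:ℝ) - lam * c₁) • (inner A v v : A) := by
            rw [smul_smul, sub_smul, one_smul]
        _ = k • inner A v v := by rw [hkc1]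
    have hlb : ∀ v : E, -(k • (inner A v v : A)) ≤ inner A v (Rop v) := by
      intro v
      rw [hinnerR]
      calc -(k • (inner A v v : A)) = ((1:ℝ) - lam * c₂) • (inner A v v : A) := by
            rw [hkc2, neg_smul]
        _ = inner A v v - lam • (c₂ • (inner A v v : A)) := by
            rw [smul_smul, sub_smul, one_smul]
        _ ≤ inner A v v - lam • (inner A (Θ v) (Θ v) : A) :=
            sub_le_sub_left (smul_le_smul_of_nonneg_left (hbound v).2 hlam0) _
    have hRsa : ∀ v w : E, (inner A (Rop v) w : A) = inner A v (Rop w) := by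
      intro v w
      rw [hRapp, hRapp, CStarModuleRight.inner_sub_left, CStarModuleRight.inner_sub_right,
        CStarModuleRight.inner_smul_left_real, CStarModuleRight.inner_smul_right_real, hTsa]
    have hRnorm : ‖Rop‖ ≤ k := aux_opnorm Rop k hk0 hRsa hub hlb
    have hRlt : ‖Rop‖ < 1 := lt_of_le_of_lt hRnorm hk1
    set U : (E →L[ℂ] E)ˣ := Units.oneSub Rop hRlt with hU
    have hUval : (U : E →L[ℂ] E) = lam • T := by
      rw [hU, Units.val_oneSub, hRop, sub_sub_cancel]
    refine ⟨lam • (↑U⁻¹ : E →L[ℂ] E), fun v => ?_, fun v => ?_, ?_⟩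
    · have hmul : (lam • T) * (↑U⁻¹ : E →L[ℂ] E) = 1 := by rw [← hUval]; exact U.mul_inv
      have := congrFun (congrArg DFunLike.coe hmul) v
      simpa [ContinuousLinearMap.mul_apply, ← hTapp] using this
    · have hmul : (↑U⁻¹ : E →L[ℂ] E) * (lam • T) = 1 := by rw [← hUval]; exact U.inv_mul
      have := congrFun (congrArg DFunLike.coe hmul) v
      simpa [ContinuousLinearMap.mul_apply, ← hTapp] using this
    · have hinv : (↑U⁻¹ : E →L[ℂ] E) = ∑' n : ℕ, Rop ^ n := rfl
      have h1n : ‖(1 : E →L[ℂ] E)‖ ≤ 1 := by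
        rw [ContinuousLinearMap.one_def]; exact ContinuousLinearMap.norm_id_le
      have hgeo := tsum_geometric_le_of_norm_lt_one Rop hRlt
      have hk' : (0:ℝ) < 1 - k := by linarith
      have hmono : (1 - ‖Rop‖)⁻¹ ≤ (1 - k)⁻¹ := by
        apply inv_anti₀ hk'
        linarith
      have hUnorm : ‖(↑U⁻¹ : E →L[ℂ] E)‖ ≤ (1 - k)⁻¹ := by
        rw [hinv]
        calc ‖∑' n : ℕ, Rop ^ n‖ ≤ ‖(1 : E →L[ℂ] E)‖ - 1 + (1 - ‖Rop‖)⁻¹ := hgeo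
          _ ≤ (1 - k)⁻¹ := by linarith
      have hfin : ∀ W : E →L[ℂ] E, ‖W‖ ≤ (1 - k)⁻¹ → ‖lam • W‖ ≤ 1 / c₁ := by
        intro W hW
        calc ‖lam • W‖ ≤ ‖lam‖ * ‖W‖ := norm_smul_le lam W
          _ = lam * ‖W‖ := by rw [Real.norm_of_nonneg hlam0]
          _ ≤ lam * (1 - k)⁻¹ := mul_le_mul_of_nonneg_left hW hlam0
          _ = 1 / c₁ := by
              rw [hlam, hkdef]
              rw [show (1:ℝ) - (c₂ - c₁) / (c₁ + c₂) = 2 * c₁ / (c₁ + c₂) by field_simp; ring]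
              field_simp
      exact hfin _ hUnorm
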